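/- Let a ≥ b ≥ 1, d ≥ 2, j ≥ 1. If |D^{j+1}_{a,b}(n)| is not divisible by d and D^{j+1}_{a,b}(n) is nonempty, then |D^j_{a,b}(n − aj)| ≢ |D^j_{a,b}(n)| (mod d). -/

import Mathlib

/-- `Dab a b n`: partitions of `n` into distinct parts each congruent to `b` mod `a`. -/
def Dab (a b n : ℕ) : Finset (Nat.Partition n) :=
  Finset.univ.filter (fun P => P.parts.Nodup ∧ ∀ x ∈ P.parts, x % a = b % a)

/-- The parts of a partition listed in nonincreasing order. -/
def partsDesc {n : ℕ} (P : Nat.Partition n) : List ℕ :=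
  (P.parts.sort (· ≤ ·)).reverse

open Classical in
/-- `Dj a b j n`: partitions in `Dab a b n` with at least `j` parts whose first `j - 1`
consecutive gaps `λ_1 - λ_2, …, λ_{j-1} - λ_j` all equal `a`. -/
noncomputable def Dj (a b j n : ℕ) : Finset (Nat.Partition n) :=
  (Dab a b n).filter (fun P => j ≤ Multiset.card P.parts ∧
    ∀ i, i + 1 < j → (partsDesc P).getD i 0 = (partsDesc P).getD (i + 1) 0 + a)

/-!
Subtracting `a` from each of the first `j` parts maps `D^j_{a,b}(n) \ D^{j+1}_{a,b}(n)`
bijectively onto `D^j_{a,b}(n - aj)`, so `|D^j(n)| = |D^j(n - aj)| + |D^{j+1}(n)|`, and a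
congruence between the first two counts makes `d` divide the third. The parts stay distinct
because `λ_j - λ_{j+1}` is a multiple of `a` other than `a`. They stay positive because
`λ_j ≤ a` would make `λ_j` the last part, so the partition would be the progression
`λ_j + (j - 1 - i) a`, whose sum is smaller than that of any partition in the nonempty set
`D^{j+1}(n)`. The counting is done on the decreasing lists of parts.
-/

lemma List.ext_getD {α : Type*} {L M : List α} (d : α) (hlen : L.length = M.length)
    (h : ∀ i < L.length, L.getD i d = M.getD i d) : L = M :=
  List.ext_getElem hlen fun i hL hM => by simpa [hL, hM] using h i hL

lemma List.sortedGT_iff_getD {α : Type*} [Preorder α] {L : List α} {d : α} :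
    L.SortedGT ↔ ∀ i, i + 1 < L.length → L.getD (i + 1) d < L.getD i d := by
  rw [List.sortedGT_iff_isChain, List.isChain_iff_getElem]
  refine forall_congr' fun i => ⟨fun h hi => ?_, fun h hi => ?_⟩ <;>
    simpa [hi, Nat.lt_of_succ_lt hi] using h hi

lemma List.forall_mem_iff_getD {α : Type*} {L : List α} {d : α} {p : α → Prop} :
    (∀ x ∈ L, p x) ↔ ∀ i < L.length, p (L.getD i d) := by
  simp +contextual [List.forall_mem_iff_getElem]

-- The lists `partsDesc P` for `P ∈ Dj a b j n`; entry `i` is the part `λ_{i+1}`.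
structure IsDjParts (a b j n : ℕ) (L : List ℕ) : Prop where
  getD_succ_lt : ∀ i, i + 1 < L.length → L.getD (i + 1) 0 < L.getD i 0
  getD_pos : ∀ i < L.length, 0 < L.getD i 0
  getD_mod : ∀ i < L.length, L.getD i 0 % a = b % a
  sum_eq : L.sum = n
  le_length : j ≤ L.length
  getD_gap : ∀ i, i + 1 < j → L.getD i 0 = L.getD (i + 1) 0 + a

lemma coe_partsDesc {n : ℕ} (P : Nat.Partition n) : (partsDesc P : Multiset ℕ) = P.parts := by
  simp [partsDesc]

lemma sortedGE_partsDesc {n : ℕ} (P : Nat.Partition n) : (partsDesc P).SortedGE := by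
  rw [partsDesc, List.sortedGE_iff_pairwise, List.pairwise_reverse]
  exact Multiset.pairwise_sort P.parts (· ≤ ·)

lemma partsDesc_injective (n : ℕ) : Function.Injective (partsDesc (n := n)) := fun P Q h =>
  Nat.Partition.ext (by rw [← coe_partsDesc P, ← coe_partsDesc Q, h])

lemma partsDesc_eq_of_coe_eq {n : ℕ} {P : Nat.Partition n} {L : List ℕ} (hL : L.SortedGE)
    (h : P.parts = L) : partsDesc P = L :=
  List.Perm.eq_of_sortedGE (sortedGE_partsDesc P) hL
    (Multiset.coe_eq_coe.mp ((coe_partsDesc P).trans h))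

lemma mem_image_partsDesc_Dj {a b j n : ℕ} {L : List ℕ} :
    L ∈ (Dj a b j n).image partsDesc ↔ IsDjParts a b j n L := by
  simp only [Finset.mem_image, Dj, Dab, Finset.mem_filter, Finset.mem_univ, true_and]
  constructor
  · rintro ⟨P, ⟨⟨hnd, hmod⟩, hlen, hgap⟩, rfl⟩
    have hmem : ∀ x, x ∈ partsDesc P ↔ x ∈ P.parts := fun x => by
      rw [← Multiset.mem_coe, coe_partsDesc]
    have hsorted : (partsDesc P).SortedGT := (sortedGE_partsDesc P).sortedGT_of_nodup
      (by rw [← Multiset.coe_nodup, coe_partsDesc]; exact hnd)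
    refine ⟨List.sortedGT_iff_getD.mp hsorted, ?_, ?_, ?_, ?_, hgap⟩
    · exact List.forall_mem_iff_getD.mp fun x hx => P.parts_pos ((hmem x).mp hx)
    · exact List.forall_mem_iff_getD.mp fun x hx => hmod x ((hmem x).mp hx)
    · rw [← Multiset.sum_coe, coe_partsDesc, P.parts_sum]
    · rwa [← Multiset.coe_card, coe_partsDesc]
  · intro h
    have hsorted : L.SortedGT := List.sortedGT_iff_getD.mpr h.getD_succ_lt
    let P : Nat.Partition n :=
      ⟨L, fun hx => List.forall_mem_iff_getD.mpr h.getD_pos _ hx, by simpa using h.sum_eq⟩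
    have hP : partsDesc P = L := partsDesc_eq_of_coe_eq hsorted.sortedGE rfl
    have hmod : ∀ x ∈ P.parts, x % a = b % a := List.forall_mem_iff_getD.mpr h.getD_mod
    exact ⟨P, ⟨⟨Multiset.coe_nodup.mpr hsorted.nodup, hmod⟩, h.le_length,
      by simpa [hP] using h.getD_gap⟩, hP⟩

def mapPrefix {α : Type*} (f : α → α) : ℕ → List α → List α
  | 0, L => L
  | _ + 1, [] => []
  | j + 1, x :: L => f x :: mapPrefix f j L

section mapPrefix
variable {α : Type*} (f : α → α) (j : ℕ) (L : List α)

@[simp] lemma length_mapPrefix : (mapPrefix f j L).length = L.length := by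
  fun_induction mapPrefix <;> simp [*]

lemma getD_mapPrefix {i : ℕ} (d : α) (hi : i < L.length) :
    (mapPrefix f j L).getD i d = if i < j then f (L.getD i d) else L.getD i d := by
  fun_induction mapPrefix generalizing i with
  | case1 => simp
  | case2 => simp at hi
  | case3 j x L ih => cases i <;> simp_all

lemma mapPrefix_mapPrefix (g : α → α) :
    mapPrefix g j (mapPrefix f j L) = mapPrefix (g ∘ f) j L := by
  fun_induction mapPrefix f j L <;> simp [mapPrefix, *]

lemma mapPrefix_eq_self (d : α) (h : ∀ i < j, i < L.length → f (L.getD i d) = L.getD i d) :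
    mapPrefix f j L = L :=
  List.ext_getD d (length_mapPrefix f j L) fun i hi => by
    rw [getD_mapPrefix f j L d (by simpa using hi)]
    split_ifs with hij
    · exact h i hij (by simpa using hi)
    · rfl

lemma sum_mapPrefix_add (c : ℕ) (L : List ℕ) (h : j ≤ L.length) :
    (mapPrefix (· + c) j L).sum = L.sum + c * j := by
  fun_induction mapPrefix (· + c) j L <;> simp_all
  grind

end mapPrefix

lemma add_le_of_lt_of_mod_eq {a x y : ℕ} (hxy : y < x) (h : x % a = y % a) : y + a ≤ x := by
  have := Nat.le_of_dvd (by omega) ((Nat.modEq_iff_dvd' hxy.le).mp h.symm)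
  omega

namespace IsDjParts
variable {a b j n : ℕ} {L : List ℕ}

lemma getD_eq_add (h : IsDjParts a b j n L) {i : ℕ} (hi : i < j) :
    L.getD i 0 = L.getD (j - 1) 0 + a * (j - 1 - i) := by
  obtain ⟨k, hk⟩ : ∃ k, i + k = j - 1 := ⟨j - 1 - i, by omega⟩
  induction k generalizing i with
  | zero => simp [← hk]
  | succ k ih =>
    rw [h.getD_gap i (by omega), ih (by omega) (by omega)]
    rw [show j - 1 - i = (j - 1 - (i + 1)) + 1 by omega]
    ring

lemma succ (h : IsDjParts a b j n L) (hj : 1 ≤ j) (hlen : j < L.length)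
    (hgap : L.getD (j - 1) 0 = L.getD j 0 + a) : IsDjParts a b (j + 1) n L where
  __ := h
  le_length := hlen
  getD_gap i hi := by
    rcases Nat.lt_or_ge (i + 1) j with hij | hij
    · exact h.getD_gap i hij
    · obtain rfl : i = j - 1 := by omega
      rwa [Nat.sub_add_cancel hj]

lemma length_eq_of_getD_le (h : IsDjParts a b j n L) (hj : 1 ≤ j)
    (hle : L.getD (j - 1) 0 ≤ a) : L.length = j := by
  by_contra hne
  have hjL : j < L.length := lt_of_le_of_ne h.le_length (Ne.symm hne)
  have hlt := h.getD_succ_lt (j - 1) (by omega)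
  rw [Nat.sub_add_cancel hj] at hlt
  have := add_le_of_lt_of_mod_eq hlt (by rw [h.getD_mod _ (by omega), h.getD_mod _ hjL])
  have := h.getD_pos j hjL
  omega

lemma pos_of_one_le (h : IsDjParts a b j n L) (hj : 1 ≤ j) : 0 < n := by
  have h0 : 0 < L.length := hj.trans h.le_length
  rw [← h.sum_eq, List.sum_pos_iff_exists_pos_nat]
  exact ⟨L.getD 0 0, List.getD_eq_getElem _ _ h0 ▸ List.getElem_mem h0, h.getD_pos 0 h0⟩

lemma mono (h : IsDjParts a b j n L) {k : ℕ} (hkj : k ≤ j) : IsDjParts a b k n L where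
  __ := h
  le_length := hkj.trans h.le_length
  getD_gap i hi := h.getD_gap i (by omega)

lemma lt_getD_pred (h : IsDjParts a b j n L) {R : List ℕ} (hR : IsDjParts a b (j + 1) n R)
    (hj : 1 ≤ j) : a < L.getD (j - 1) 0 := by
  -- Otherwise `L` is the progression `λ_j + (j - 1 - i) a` and nothing more, and shifting it up by
  -- `R_j - λ_j` gives the first `j` parts of `R`, which would then sum to more than `n`.
  by_contra! hle
  have hlen := h.length_eq_of_getD_le hj hle
  have hRgap := hR.getD_gap (j - 1) (by omega)
  rw [Nat.sub_add_cancel hj] at hRgap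
  have hRpos := hR.getD_pos j hR.le_length
  set c := R.getD (j - 1) 0 - L.getD (j - 1) 0
  have htake : R.take j = mapPrefix (· + c) j L := by
    refine List.ext_getD 0 (by simp; have := hR.le_length; omega) fun i hi => ?_
    have hij : i < j := by simp at hi; omega
    have hRi : (R.take j).getD i 0 = R.getD i 0 := by simp [hij]
    rw [getD_mapPrefix _ _ _ _ (by omega), if_pos hij, hRi,
      (hR.mono j.le_succ).getD_eq_add hij, h.getD_eq_add hij]
    omega
  have hsum := sum_mapPrefix_add j c L (by omega)
  rw [← htake, h.sum_eq] at hsum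
  have hsplit := R.sum_take_add_sum_drop j
  rw [hR.sum_eq] at hsplit
  have : 0 < c * j := Nat.mul_pos (by omega) hj
  omega

lemma mapPrefix_add_mapPrefix_sub (h : IsDjParts a b j n L) (ha : a < L.getD (j - 1) 0) :
    mapPrefix (· + a) j (mapPrefix (· - a) j L) = L := by
  rw [mapPrefix_mapPrefix]
  refine mapPrefix_eq_self _ _ _ 0 fun i hi _ => ?_
  have := h.getD_eq_add hi
  simp only [Function.comp_apply]
  omega

lemma mapPrefix_sub (h : IsDjParts a b j n L) (hnot : ¬ IsDjParts a b (j + 1) n L) (hj : 1 ≤ j)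
    (ha : a < L.getD (j - 1) 0) : IsDjParts a b j (n - a * j) (mapPrefix (· - a) j L) := by
  have hbig : ∀ i < j, a < L.getD i 0 := fun i hi => by rw [h.getD_eq_add hi]; omega
  have hcut : ∀ i, i + 1 = j → i + 1 < L.length → L.getD (i + 1) 0 + a < L.getD i 0 := by
    rintro i rfl hjL
    have hlt := h.getD_succ_lt i hjL
    refine lt_of_le_of_ne (add_le_of_lt_of_mod_eq hlt ?_) fun heq => hnot (h.succ hj hjL ?_)
    · rw [h.getD_mod _ (by omega), h.getD_mod _ hjL]
    · simpa using heq.symm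
  have hget : ∀ i < L.length,
      (mapPrefix (· - a) j L).getD i 0 = if i < j then L.getD i 0 - a else L.getD i 0 :=
    fun i hi => getD_mapPrefix _ _ _ _ hi
  refine ⟨fun i hi => ?_, fun i hi => ?_, fun i hi => ?_, ?_, ?_, fun i hi => ?_⟩
  · rw [length_mapPrefix] at hi
    have := h.getD_succ_lt i hi
    rw [hget i (by omega), hget (i + 1) hi]
    rcases lt_trichotomy (i + 1) j with hij | hij | hij
    · have := hbig (i + 1) hij
      split_ifs <;> omega
    · have := hcut i hij hi
      split_ifs <;> omega
    · split_ifs <;> omega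
  · rw [length_mapPrefix] at hi
    rw [hget i hi]
    split_ifs with hij
    · have := hbig i hij; omega
    · exact h.getD_pos i hi
  · rw [length_mapPrefix] at hi
    rw [hget i hi]
    split_ifs with hij
    · rw [← Nat.mod_eq_sub_mod (hbig i hij).le, h.getD_mod i hi]
    · exact h.getD_mod i hi
  · have := sum_mapPrefix_add j a (mapPrefix (· - a) j L) (by simpa using h.le_length)
    rw [h.mapPrefix_add_mapPrefix_sub ha, h.sum_eq] at this
    omega
  · simpa using h.le_length
  · have := h.getD_gap i hi
    have := hbig (i + 1) hi
    have hjL := h.le_length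
    rw [hget i (by omega), hget (i + 1) (by omega), if_pos (by omega), if_pos hi]
    omega

lemma mapPrefix_add (h : IsDjParts a b j n L) (hj : 1 ≤ j) :
    IsDjParts a b j (n + a * j) (mapPrefix (· + a) j L) ∧
      ¬ IsDjParts a b (j + 1) (n + a * j) (mapPrefix (· + a) j L) := by
  have hget : ∀ i < L.length,
      (mapPrefix (· + a) j L).getD i 0 = if i < j then L.getD i 0 + a else L.getD i 0 :=
    fun i hi => getD_mapPrefix _ _ _ _ hi
  refine ⟨⟨fun i hi => ?_, fun i hi => ?_, fun i hi => ?_, ?_, ?_, fun i hi => ?_⟩,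
    fun h' => ?_⟩
  · rw [length_mapPrefix] at hi
    have := h.getD_succ_lt i hi
    rw [hget i (by omega), hget (i + 1) hi]
    split_ifs <;> omega
  · rw [length_mapPrefix] at hi
    have := h.getD_pos i hi
    rw [hget i hi]
    split_ifs <;> omega
  · rw [length_mapPrefix] at hi
    rw [hget i hi]
    split_ifs
    · rw [Nat.add_mod_right, h.getD_mod i hi]
    · exact h.getD_mod i hi
  · rw [sum_mapPrefix_add j a L h.le_length, h.sum_eq]
  · simpa using h.le_length
  · have := h.getD_gap i hi
    have hjL := h.le_length
    rw [hget i (by omega), hget (i + 1) (by omega), if_pos (by omega), if_pos hi]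
    omega
  · have hjL : j < L.length := by simpa using h'.le_length
    have hgap := h'.getD_gap (j - 1) (by omega)
    have hlt := h.getD_succ_lt (j - 1) (by omega)
    rw [Nat.sub_add_cancel hj] at hgap hlt
    rw [hget _ (by omega), hget _ hjL, if_pos (by omega), if_neg (by omega)] at hgap
    omega

end IsDjParts

lemma Dj_succ_subset (a b j n : ℕ) : Dj a b (j + 1) n ⊆ Dj a b j n := fun P hP => by
  simp only [Dj, Finset.mem_filter] at hP ⊢
  exact ⟨hP.1, by omega, fun i hi => hP.2.2 i (by omega)⟩

lemma card_Dj_eq_card_Dj_sub_add {a b j n : ℕ} (hj : 1 ≤ j)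
    (hne : (Dj a b (j + 1) n).Nonempty) :
    (Dj a b j n).card = (Dj a b j (n - a * j)).card + (Dj a b (j + 1) n).card := by
  obtain ⟨R, hR⟩ := hne
  have hRparts : IsDjParts a b (j + 1) n (partsDesc R) :=
    mem_image_partsDesc_Dj.mp (Finset.mem_image_of_mem _ hR)
  rw [← Finset.card_sdiff_add_card_eq_card (Dj_succ_subset a b j n), Nat.add_right_cancel_iff,
    ← Finset.card_image_of_injective _ (partsDesc_injective n),
    ← Finset.card_image_of_injective _ (partsDesc_injective _),
    Finset.image_sdiff _ _ (partsDesc_injective n)]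
  refine Finset.card_nbij' (mapPrefix (· - a) j) (mapPrefix (· + a) j) ?_ ?_ ?_ ?_
  all_goals simp only [Set.MapsTo, Set.LeftInvOn, Set.RightInvOn, Finset.coe_sdiff,
    Set.mem_sdiff, Finset.mem_coe, mem_image_partsDesc_Dj]
  · rintro L ⟨hL, hnot⟩
    exact hL.mapPrefix_sub hnot hj (hL.lt_getD_pred hRparts hj)
  · intro L hL
    have := hL.pos_of_one_le hj
    simpa [Nat.sub_add_cancel (by omega : a * j ≤ n)] using hL.mapPrefix_add hj
  · rintro L ⟨hL, -⟩
    exact hL.mapPrefix_add_mapPrefix_sub (hL.lt_getD_pred hRparts hj)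
  · intro L _
    rw [mapPrefix_mapPrefix]
    exact mapPrefix_eq_self _ _ _ 0 fun i _ _ => Nat.add_sub_cancel _ _

theorem stmt8_general (a b d j n : ℕ) (hj : 1 ≤ j)
    (hne : (Dj a b (j + 1) n).Nonempty) (hdvd : ¬ d ∣ (Dj a b (j + 1) n).card) :
    ¬ (Dj a b j (n - a * j)).card ≡ (Dj a b j n).card [MOD d] := by
  rw [card_Dj_eq_card_Dj_sub_add hj hne]
  intro h
  exact hdvd (Nat.modEq_zero_iff_dvd.mp (Nat.ModEq.add_left_cancel' _ h.symm))

/-- If `|D^{j+1}_{a,b}(n)|` is nonzero and not divisible by `d`, then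
`|D^j_{a,b}(n - aj)| ≢ |D^j_{a,b}(n)| (mod d)`. -/
theorem stmt8 (a b d j n : ℕ) (hb : 1 ≤ b) (hab : b ≤ a) (hd : 2 ≤ d) (hj : 1 ≤ j)
    (hne : (Dj a b (j + 1) n).Nonempty) (hdvd : ¬ d ∣ (Dj a b (j + 1) n).card) :
    ¬ (Dj a b j (n - a * j)).card ≡ (Dj a b j n).card [MOD d] :=
  stmt8_general a b d j n hj hne hdvd
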